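/- Let X_1, ..., X_n be i.i.d. with distribution (1-π)F + πH, where π ∈ (0,1), F has a Lebesgue density f, and H is discrete with countable support. Write X_i = (1−Λ_i)V_i + Λ_i U_i with Λ_i ~ Bernoulli(π), V_i ~ F, U_i ~ H all independent. Let U_n¹ be the set of values appearing exactly once among X_1,...,X_n, let f̂_{U_n¹} be the KDE built on {X_i : X_i ∈ U_n¹} and f̂^V the KDE built by replacing those X_i by the corresponding V_i. Then almost surely ∫ |f̂^V(x) − f̂_{U_n¹}(x)| dx ≤ (2/(|U_n¹| ∨ 1)) Σ_{i=1}^n 1{X_i ∈ S \ R_n}, where S is the support of H and R_n the set of repeated values. -/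

import Mathlib

/-! Almost surely every `Λ i` is `0` or `1` and every `U i` lies in `S`, so each observation
either equals its latent `V i` or lies in `S`. Moving one point of a kernel density estimator on
`m` points changes it by at most `2 / m` in `L¹`, and a moved index of the uniquely-appearing
sample has its observation in `S` and not repeated. -/

open MeasureTheory ProbabilityTheory Filter
open scoped ENNReal Classical BigOperators

noncomputable section

variable {Ω : Type*}

/-- The (random) set of values appearing at least twice among `X 0, ..., X (n-1)`. -/
def repeatedSet (X : ℕ → Ω → ℝ) (n : ℕ) (ω : Ω) : Set ℝ :=
  {x | 2 ≤ ((Finset.range n).filter (fun i => X i ω = x)).card}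

/-- The (random) set of values appearing exactly once among `X 0, ..., X (n-1)`. -/
def uniqueSet (X : ℕ → Ω → ℝ) (n : ℕ) (ω : Ω) : Set ℝ :=
  {x | ((Finset.range n).filter (fun i => X i ω = x)).card = 1}

/-- Indices `i < n` whose observation `X i` appears exactly once in the sample. -/
def uniqueIdx (X : ℕ → Ω → ℝ) (n : ℕ) (ω : Ω) : Finset ℕ :=
  (Finset.range n).filter (fun i => ((Finset.range n).filter (fun j => X j ω = X i ω)).card = 1)

/-- Kernel density estimator built on the points `Z i`, `i ∈ pts`, with kernel `K` and
bandwidth `h`. -/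
def kdeOn (K : ℝ → ℝ) (h : ℝ) (pts : Finset ℕ) (Z : ℕ → ℝ) (x : ℝ) : ℝ :=
  (1 / ((max pts.card 1 : ℕ) * h)) * ∑ i ∈ pts, K ((x - Z i) / h)

/-- The Bernoulli(π) law on ℝ, i.e. `(1-π)δ₀ + πδ₁`. -/
def bernoulliLaw (π : ℝ) : Measure ℝ :=
  ENNReal.ofReal (1 - π) • Measure.dirac (0 : ℝ) + ENNReal.ofReal π • Measure.dirac 1

lemma integral_comp_sub_div_of_pos (g : ℝ → ℝ) {h : ℝ} (hh : 0 < h) (a : ℝ) :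
    ∫ x, g ((x - a) / h) = h * ∫ u, g u := by
  rw [integral_sub_right_eq_self (fun y => g (y / h)) a, Measure.integral_comp_div,
    abs_of_pos hh, smul_eq_mul]

lemma integral_abs_comp_sub_div_sub_le {K : ℝ → ℝ} (hK : Integrable K) {h : ℝ} (hh : 0 < h)
    (a b : ℝ) :
    ∫ x, |K ((x - a) / h) - K ((x - b) / h)| ≤ 2 * h * ∫ u, |K u| := by
  have hint (c : ℝ) : Integrable (fun x => |K ((x - c) / h)|) :=
    ((hK.comp_div hh.ne').comp_sub_right c).abs
  calc ∫ x, |K ((x - a) / h) - K ((x - b) / h)|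
      ≤ ∫ x, (|K ((x - a) / h)| + |K ((x - b) / h)|) :=
        integral_mono (((hK.comp_div hh.ne').comp_sub_right a).sub
          ((hK.comp_div hh.ne').comp_sub_right b)).abs ((hint a).add (hint b))
          fun x => abs_sub _ _
    _ = 2 * h * ∫ u, |K u| := by
        rw [integral_add (hint a) (hint b), integral_comp_sub_div_of_pos (fun u => |K u|) hh,
          integral_comp_sub_div_of_pos (fun u => |K u|) hh]
        ring

lemma integral_abs_kdeOn_sub_kdeOn_le {K : ℝ → ℝ} (hK : Integrable K) {h : ℝ} (hh : 0 < h)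
    (pts : Finset ℕ) (Z W : ℕ → ℝ) :
    ∫ x, |kdeOn K h pts Z x - kdeOn K h pts W x|
      ≤ 2 * (∫ u, |K u|) / (max pts.card 1 : ℕ) * (pts.filter fun i => Z i ≠ W i).card := by
  set D := pts.filter fun i => Z i ≠ W i
  set c : ℝ := 1 / ((max pts.card 1 : ℕ) * h)
  have hc : 0 < c := by positivity
  have hdiff (x : ℝ) : kdeOn K h pts Z x - kdeOn K h pts W x
      = c * ∑ i ∈ D, (K ((x - Z i) / h) - K ((x - W i) / h)) := by
    rw [kdeOn, kdeOn, ← mul_sub, ← Finset.sum_sub_distrib, Finset.sum_filter_of_ne]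
    intro i _ hi heq
    exact hi (by rw [heq, sub_self])
  have hint (i : ℕ) : Integrable fun x => |K ((x - Z i) / h) - K ((x - W i) / h)| :=
    (((hK.comp_div hh.ne').comp_sub_right _).sub ((hK.comp_div hh.ne').comp_sub_right _)).abs
  calc ∫ x, |kdeOn K h pts Z x - kdeOn K h pts W x|
      ≤ ∫ x, c * ∑ i ∈ D, |K ((x - Z i) / h) - K ((x - W i) / h)| := by
        refine integral_mono_of_nonneg (.of_forall fun _ => abs_nonneg _)
          ((integrable_finsetSum D fun i _ => hint i).const_mul c) (.of_forall fun x => ?_)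
        dsimp only
        rw [hdiff, abs_mul, abs_of_pos hc]
        exact mul_le_mul_of_nonneg_left (Finset.abs_sum_le_sum_abs _ _) hc.le
    _ = c * ∑ i ∈ D, ∫ x, |K ((x - Z i) / h) - K ((x - W i) / h)| := by
        rw [integral_const_mul, integral_finsetSum D fun i _ => hint i]
    _ ≤ c * ∑ _i ∈ D, 2 * h * ∫ u, |K u| := by
        gcongr with i
        exact integral_abs_comp_sub_div_sub_le hK hh _ _
    _ = _ := by
        rw [Finset.sum_const, nsmul_eq_mul]
        simp only [c, D]
        field_simp

lemma bernoulliLaw_ae_eq_zero_or_eq_one (π : ℝ) : ∀ᵐ y ∂bernoulliLaw π, y = 0 ∨ y = 1 := by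
  simp only [bernoulliLaw, ae_add_measure_iff]
  exact ⟨Measure.ae_smul_measure (by simp [ae_dirac_eq]) _,
    Measure.ae_smul_measure (by simp [ae_dirac_eq]) _⟩

lemma notMem_repeatedSet_of_mem_uniqueIdx {X : ℕ → Ω → ℝ} {n : ℕ} {ω : Ω} {i : ℕ}
    (hi : i ∈ uniqueIdx X n ω) : X i ω ∉ repeatedSet X n ω := by
  have := (Finset.mem_filter.mp hi).2
  simp only [repeatedSet, Set.mem_ofPred_eq]
  omega

lemma filter_uniqueIdx_ne_subset {X V : ℕ → Ω → ℝ} {S : Set ℝ} {ω : Ω}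
    (hXV : ∀ i, X i ω = V i ω ∨ X i ω ∈ S) (n : ℕ) :
    (uniqueIdx X n ω).filter (fun i => V i ω ≠ X i ω)
      ⊆ (Finset.range n).filter fun i => X i ω ∈ S \ repeatedSet X n ω := by
  intro i hi
  obtain ⟨hiU, hne⟩ := Finset.mem_filter.mp hi
  exact Finset.mem_filter.mpr ⟨(Finset.mem_filter.mp hiU).1,
    (hXV i).resolve_left (Ne.symm hne), notMem_repeatedSet_of_mem_uniqueIdx hiU⟩

theorem stmt9_general [MeasurableSpace Ω] (P : Measure Ω)
    (X Λ V U : ℕ → Ω → ℝ)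
    (hΛmeas : ∀ i, Measurable (Λ i))
    (hUmeas : ∀ i, Measurable (U i))
    (π : ℝ)
    (Hm : Measure ℝ)
    (S : Set ℝ) (hHS : Hm Sᶜ = 0)
    (hcoupling : ∀ i ω, X i ω = (1 - Λ i ω) * V i ω + Λ i ω * U i ω)
    (hlawΛ : ∀ i, Measure.map (Λ i) P = bernoulliLaw π)
    (hlawU : ∀ i, Measure.map (U i) P = Hm)
    (K : ℝ → ℝ) (hK0 : ∀ u, 0 ≤ K u) (hKint : Integrable K volume) (hK1 : ∫ u, K u = 1)
    (h : ℝ) (hh : 0 < h) :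
    ∀ᵐ ω ∂P, ∀ n : ℕ,
      (∫ x, |kdeOn K h (uniqueIdx X n ω) (fun i => V i ω) x -
             kdeOn K h (uniqueIdx X n ω) (fun i => X i ω) x|)
        ≤ (2 / ((max (uniqueIdx X n ω).card 1 : ℕ) : ℝ)) *
            ∑ i ∈ Finset.range n, (if X i ω ∈ S \ repeatedSet X n ω then (1 : ℝ) else 0) := by
  have hXV : ∀ᵐ ω ∂P, ∀ i, X i ω = V i ω ∨ X i ω ∈ S := by
    refine ae_all_iff.mpr fun i => ?_
    have hΛ : ∀ᵐ ω ∂P, Λ i ω = 0 ∨ Λ i ω = 1 :=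
      ae_of_ae_map (hΛmeas i).aemeasurable ((hlawΛ i).symm ▸ bernoulliLaw_ae_eq_zero_or_eq_one π)
    have hU : ∀ᵐ ω ∂P, U i ω ∈ S :=
      ae_of_ae_map (hUmeas i).aemeasurable ((hlawU i).symm ▸ ae_iff.mpr hHS)
    filter_upwards [hΛ, hU] with ω hΛω hUω
    rcases hΛω with h0 | h1
    · left; rw [hcoupling, h0]; ring
    · right; rwa [hcoupling, h1, sub_self, zero_mul, zero_add, one_mul]
  have hKabs : ∫ u, |K u| = 1 := by simpa only [abs_of_nonneg (hK0 _)] using hK1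
  filter_upwards [hXV] with ω hω n
  calc _ ≤ 2 * (∫ u, |K u|) / ((max (uniqueIdx X n ω).card 1 : ℕ) : ℝ)
        * ((uniqueIdx X n ω).filter fun i => V i ω ≠ X i ω).card :=
        integral_abs_kdeOn_sub_kdeOn_le hKint hh _ _ _
    _ ≤ _ := by
        rw [hKabs, mul_one, Finset.sum_boole]
        gcongr
        exact filter_uniqueIdx_ne_subset hω n

/-- almost-sure L¹ coupling bound between the KDE built on the uniquely-appearing
observations and the KDE built on the corresponding latent continuous samples. -/
theorem stmt9 [MeasurableSpace Ω] (P : Measure Ω) [IsProbabilityMeasure P]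
    (X Λ V U : ℕ → Ω → ℝ)
    (hΛmeas : ∀ i, Measurable (Λ i)) (hVmeas : ∀ i, Measurable (V i))
    (hUmeas : ∀ i, Measurable (U i))
    (π : ℝ) (hπ : π ∈ Set.Ioo (0 : ℝ) 1)
    (F Hm : Measure ℝ) [IsProbabilityMeasure F] [IsProbabilityMeasure Hm]
    (hF : F ≪ volume)
    (S : Set ℝ) (hS : S.Countable) (hHS : Hm Sᶜ = 0)
    (hcoupling : ∀ i ω, X i ω = (1 - Λ i ω) * V i ω + Λ i ω * U i ω)
    (hindep : iIndepFun
      (fun p : ℕ × Fin 3 => ![Λ p.1, V p.1, U p.1] p.2) P)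
    (hlawΛ : ∀ i, Measure.map (Λ i) P = bernoulliLaw π)
    (hlawV : ∀ i, Measure.map (V i) P = F)
    (hlawU : ∀ i, Measure.map (U i) P = Hm)
    (K : ℝ → ℝ) (hK0 : ∀ u, 0 ≤ K u) (hKint : Integrable K volume) (hK1 : ∫ u, K u = 1)
    (h : ℝ) (hh : 0 < h) :
    ∀ᵐ ω ∂P, ∀ n : ℕ,
      (∫ x, |kdeOn K h (uniqueIdx X n ω) (fun i => V i ω) x -
             kdeOn K h (uniqueIdx X n ω) (fun i => X i ω) x|)
        ≤ (2 / ((max (uniqueIdx X n ω).card 1 : ℕ) : ℝ)) *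
            ∑ i ∈ Finset.range n, (if X i ω ∈ S \ repeatedSet X n ω then (1 : ℝ) else 0) :=
  stmt9_general P X Λ V U hΛmeas hUmeas π Hm S hHS hcoupling hlawΛ hlawU K hK0 hKint hK1 h hh
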